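/- arXiv:1003.1004 — 7 statements merged into one kernel-verified Lean document; each statement's English description precedes it below -/
import Mathlib

section
/- Let L be a subspace of E^p which is isotropic, and set S := pr_T(L). If S ≠ T and dim S > dim T − p (equivalently, ⋀^p S° = {0}), then pr_T(L^⊥) is not contained in S; in particular L is strictly contained in L^⊥ and L is not Lagrangian. -/
open Module

/-- `E^p` for `p = q+1`: the vector space `T ⊕ ⋀^{q+1} T*`. -/
abbrev EP (T : Type) [AddCommGroup T] [Module ℝ T] (q : ℕ) :=
  T × (T [⋀^Fin (q+1)]→ₗ[ℝ] ℝ)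

variable {T : Type} [AddCommGroup T] [Module ℝ T]

/-- The `⋀^q T*`-valued pairing on `E^{q+1}`: `⟨(X,α),(Y,β)⟩ = ι_X β + ι_Y α`. -/
noncomputable def pairing {q : ℕ} (e₁ e₂ : EP T q) : T [⋀^Fin q]→ₗ[ℝ] ℝ :=
  e₂.2.curryLeft e₁.1 + e₁.2.curryLeft e₂.1

def orthSet {q : ℕ} (L : Set (EP T q)) : Set (EP T q) :=
  {e | ∀ l ∈ L, pairing e l = 0}

def IsIsotropic {q : ℕ} (L : Set (EP T q)) : Prop :=
  ∀ e₁ ∈ L, ∀ e₂ ∈ L, pairing e₁ e₂ = 0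

/-!
Since `dim S + p > dim T`, a `p`-form annihilated by every vector of `S` vanishes, so `pr_T` is
injective on the isotropic subspace `L`. Fix `X ∉ S`; we build `α` with `(X, α) ⊥ L` along a
basis `l₁, …, lₙ` of `L`, whose `T`-parts `Yᵢ` are therefore independent. If
`(X, α) ⊥ l₁, …, lₖ`, the defect `δ = ⟨(X, α), lₖ₊₁⟩` is annihilated by `Y₁, …, Yₖ₊₁` (this is
where isotropy enters), so for a covector `y` with `y Yₖ₊₁ = 1` and `y Yᵢ = 0` for `i ≤ k`, the
form `α - y ∧ δ` is orthogonal to `l₁, …, lₖ₊₁`. The resulting `(X, α)` lies in `L^⊥` but not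
in `L`.
-/

theorem Submodule.exists_dual_eq_one_of_notMem {K V : Type*} [Field K] [AddCommGroup V]
    [Module K V] {p : Submodule K V} {x : V} (hx : x ∉ p) :
    ∃ y : Dual K V, y x = 1 ∧ ∀ z ∈ p, y z = 0 := by
  obtain ⟨f, hfx, hf⟩ := p.exists_dual_map_eq_bot_of_notMem hx inferInstance
  refine ⟨(f x)⁻¹ • f, by simp [hfx], fun z hz => ?_⟩
  have hfz : f z ∈ p.map f := Submodule.mem_map_of_mem hz
  rw [hf, Submodule.mem_bot] at hfz
  simp [hfz]

namespace AlternatingMap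

variable {R M N : Type*} [CommRing R] [AddCommGroup M] [Module R M] [AddCommGroup N] [Module R N]
  {n : ℕ}

theorem curryLeft_curryLeft_swap (f : M [⋀^Fin (n + 2)]→ₗ[R] N) (a b : M) :
    (f.curryLeft a).curryLeft b = -(f.curryLeft b).curryLeft a := by
  have h := curryLeft_same f (a + b)
  simp only [map_add, curryLeft_add, LinearMap.add_apply, curryLeft_same] at h
  rw [eq_neg_iff_add_eq_zero]
  linear_combination (norm := abel) h

theorem map_update_eq_zero_of_curryLeft_eq_zero (f : M [⋀^Fin (n + 1)]→ₗ[R] N) {x : M}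
    (hx : f.curryLeft x = 0) (v : Fin (n + 1) → M) (k : Fin (n + 1)) :
    f (Function.update v k x) = 0 := by
  rw [← Fin.insertNth_removeNth, map_insertNth, ← curryLeft_apply_apply, hx, zero_apply,
    smul_zero]

theorem map_update_sum_smul {ι : Type*} [Fintype ι] [DecidableEq ι] (f : M [⋀^ι]→ₗ[R] N)
    (v : ι → M) (c : ι → R) (k : ι) :
    f (Function.update v k (∑ i, c i • v i)) = c k • f v := by
  rw [map_update_sum, Finset.sum_eq_single k]
  · simp [map_update_smul]
  · intro i _ hik
    rw [map_update_smul, f.map_update_self v hik.symm, smul_zero]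
  · simp

/-- `alternatizeUncurryFin (y.smulRight δ)` is the wedge product `y ∧ δ`. -/
theorem curryLeft_alternatizeUncurryFin_smulRight (y : M →ₗ[R] R)
    (δ : M [⋀^Fin (n + 1)]→ₗ[R] N) {v : M} (hv : δ.curryLeft v = 0) :
    (alternatizeUncurryFin (y.smulRight δ)).curryLeft v = y v • δ := by
  ext w
  have hrem (j : Fin (n + 1)) :
      Fin.removeNth j.succ (Matrix.vecCons v w) = Matrix.vecCons v (Fin.removeNth j w) := by
    ext i
    refine Fin.cases ?_ (fun i => ?_) i <;> simp [Fin.removeNth_apply, Fin.succ_succAbove_succ]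
  rw [curryLeft_apply_apply, alternatizeUncurryFin_apply, Fin.sum_univ_succ]
  simp [hrem, ← curryLeft_apply_apply, hv]

section Field

variable {K M N : Type*} [Field K] [AddCommGroup M] [Module K M] [FiniteDimensional K M]
  [AddCommGroup N] [Module K N] {n : ℕ}

theorem eq_zero_of_forall_curryLeft_eq_zero (S : Submodule K M)
    (hS : finrank K M < finrank K S + (n + 1)) (f : M [⋀^Fin (n + 1)]→ₗ[K] N)
    (hf : ∀ Y ∈ S, f.curryLeft Y = 0) : f = 0 := by
  classical
  ext v
  by_cases hv : LinearIndependent K v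
  swap
  · exact f.map_linearDependent v hv
  obtain ⟨Y, ⟨hYS, hYv⟩, hY0⟩ : ∃ Y ∈ S ⊓ Submodule.span K (Set.range v), Y ≠ 0 := by
    apply Submodule.exists_mem_ne_zero_of_ne_bot
    intro h
    have hsum := Submodule.finrank_sup_add_finrank_inf_eq S (Submodule.span K (Set.range v))
    rw [h, finrank_bot, finrank_span_eq_card hv, Fintype.card_fin] at hsum
    have := Submodule.finrank_le (S ⊔ Submodule.span K (Set.range v))
    omega
  obtain ⟨c, rfl⟩ := (Submodule.mem_span_range_iff_exists_fun K).1 hYv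
  obtain ⟨k, hk⟩ : ∃ k, c k ≠ 0 := by
    by_contra! h
    simp [h] at hY0
  have : c k • f v = 0 := by
    rw [← map_update_sum_smul, map_update_eq_zero_of_curryLeft_eq_zero _ (hf _ hYS)]
  exact (smul_eq_zero.1 this).resolve_left hk

end Field

end AlternatingMap

section Pairing

variable {q : ℕ}

theorem pairing_eq_zero_of_mem_span {e : EP T q} {s : Set (EP T q)}
    (h : ∀ l ∈ s, pairing e l = 0) {l : EP T q} (hl : l ∈ Submodule.span ℝ s) :
    pairing e l = 0 := by
  induction hl using Submodule.span_induction with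
  | mem l hl => exact h l hl
  | zero => simp [pairing]
  | add a b _ _ ha hb =>
    simp only [pairing] at ha hb ⊢
    simp only [Prod.snd_add, Prod.fst_add, AlternatingMap.curryLeft_add, LinearMap.add_apply,
      map_add]
    linear_combination (norm := abel) ha + hb
  | smul c a _ ha =>
    simp only [pairing] at ha ⊢
    simp [AlternatingMap.curryLeft_smul, ← smul_add, ha]

theorem curryLeft_pairing_add_curryLeft_pairing {m : ℕ} (e l l' : EP T (m + 1)) :
    (pairing e l).curryLeft l'.1 + (pairing e l').curryLeft l.1 =
      -(pairing l l').curryLeft e.1 := by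
  simp only [pairing, AlternatingMap.curryLeft_add, LinearMap.add_apply]
  rw [AlternatingMap.curryLeft_curryLeft_swap l.2, AlternatingMap.curryLeft_curryLeft_swap l'.2,
    AlternatingMap.curryLeft_curryLeft_swap e.2 l.1]
  abel

theorem IsIsotropic.disjoint_ker_fst [FiniteDimensional ℝ T] {L : Submodule ℝ (EP T q)}
    (hL : IsIsotropic (L : Set (EP T q)))
    (hdim : finrank ℝ T < finrank ℝ (L.map (LinearMap.fst ℝ T _)) + (q + 1)) :
    Disjoint L (LinearMap.ker (LinearMap.fst ℝ T (T [⋀^Fin (q + 1)]→ₗ[ℝ] ℝ))) := by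
  rw [Submodule.disjoint_def]
  rintro ⟨x, β⟩ hl hx
  obtain rfl : x = 0 := hx
  suffices β = 0 by rw [this]; rfl
  refine AlternatingMap.eq_zero_of_forall_curryLeft_eq_zero _ hdim β ?_
  rintro _ ⟨l, hl', rfl⟩
  simpa [pairing] using hL _ hl l hl'

end Pairing

theorem exists_pairing_eq_zero {m : ℕ} {J : Type*} [Finite J] (l : J → EP T (m + 1))
    (hl : ∀ j k, pairing (l j) (l k) = 0) (hli : LinearIndependent ℝ fun j => (l j).1)
    (X : T) : ∃ α, ∀ k, pairing (X, α) (l k) = 0 := by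
  classical
  have := Fintype.ofFinite J
  suffices ∀ s : Finset J, ∃ α, ∀ k ∈ s, pairing (X, α) (l k) = 0 by
    simpa using this Finset.univ
  intro s
  induction s using Finset.induction_on with
  | empty => exact ⟨0, by simp⟩
  | insert a s ha ih =>
    obtain ⟨α, hα⟩ := ih
    obtain ⟨y, hya, hys⟩ := Submodule.exists_dual_eq_one_of_notMem (hli.notMem_span_image ha)
    set δ := pairing (X, α) (l a)
    have hδ : ∀ k ∈ insert a s, δ.curryLeft (l k).1 = 0 := by
      intro k hk
      have hsum := curryLeft_pairing_add_curryLeft_pairing (X, α) (l a) (l k)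
      rw [hl a k, AlternatingMap.curryLeft_zero, LinearMap.zero_apply, neg_zero] at hsum
      rcases Finset.mem_insert.1 hk with rfl | hk
      · rwa [← two_smul ℝ, smul_eq_zero, or_iff_right two_ne_zero] at hsum
      · rwa [hα k hk, AlternatingMap.curryLeft_zero, LinearMap.zero_apply, add_zero] at hsum
    refine ⟨α - AlternatingMap.alternatizeUncurryFin (y.smulRight δ), fun k hk => ?_⟩
    have hsub : pairing (X, α - AlternatingMap.alternatizeUncurryFin (y.smulRight δ)) (l k) =
        pairing (X, α) (l k) -
          (AlternatingMap.alternatizeUncurryFin (y.smulRight δ)).curryLeft (l k).1 := by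
      simp only [pairing, ← AlternatingMap.curryLeftLinearMap_apply, map_sub, LinearMap.sub_apply]
      abel
    rw [hsub, AlternatingMap.curryLeft_alternatizeUncurryFin_smulRight _ _ (hδ k hk)]
    rcases Finset.mem_insert.1 hk with rfl | hk
    · simp [hya, δ]
    · have : y (l k).1 = 0 := hys _ (Submodule.subset_span (Set.mem_image_of_mem _ hk))
      simp [hα k hk, this]

theorem exists_mem_orthSet [FiniteDimensional ℝ T] {m : ℕ} {L : Submodule ℝ (EP T (m + 1))}
    (hL : IsIsotropic (L : Set (EP T (m + 1))))
    (hfst : Disjoint L (LinearMap.ker (LinearMap.fst ℝ T (T [⋀^Fin (m + 1 + 1)]→ₗ[ℝ] ℝ))))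
    (X : T) : ∃ α, (X, α) ∈ orthSet (L : Set (EP T (m + 1))) := by
  obtain ⟨b, hbL, hspan, hb⟩ := exists_linearIndependent ℝ (L : Set (EP T (m + 1)))
  rw [Submodule.span_eq] at hspan
  have hfstb : LinearIndependent ℝ fun e : b => (e : EP T (m + 1)).1 :=
    hb.map (f := LinearMap.fst ℝ T _) (by rwa [Subtype.range_coe, hspan])
  have : Finite b := hfstb.finite_of_isNoetherian
  obtain ⟨α, hα⟩ := exists_pairing_eq_zero (fun e : b => (e : EP T (m + 1)))
    (fun j k => hL _ (hbL j.2) _ (hbL k.2)) hfstb X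
  exact ⟨α, fun l hl => pairing_eq_zero_of_mem_span (fun e he => hα ⟨e, he⟩) (hspan ▸ hl)⟩

theorem stmt1_general [FiniteDimensional ℝ T] (q : ℕ)
    (L : Submodule ℝ (EP T q))
    (hiso : IsIsotropic (L : Set (EP T q)))
    (hne : L.map (LinearMap.fst ℝ T (T [⋀^Fin (q+1)]→ₗ[ℝ] ℝ)) ≠ ⊤)
    (hdim : finrank ℝ T - (q+1) <
      finrank ℝ (L.map (LinearMap.fst ℝ T (T [⋀^Fin (q+1)]→ₗ[ℝ] ℝ)))) :
    (¬ ∀ e ∈ orthSet (L : Set (EP T q)),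
        e.1 ∈ L.map (LinearMap.fst ℝ T (T [⋀^Fin (q+1)]→ₗ[ℝ] ℝ))) ∧
    (L : Set (EP T q)) ⊂ orthSet (L : Set (EP T q)) ∧
    (L : Set (EP T q)) ≠ orthSet (L : Set (EP T q)) := by
  obtain ⟨X, hX⟩ : ∃ X, X ∉ L.map (LinearMap.fst ℝ T (T [⋀^Fin (q+1)]→ₗ[ℝ] ℝ)) := by
    by_contra! h
    exact hne (Submodule.eq_top_iff'.2 h)
  obtain ⟨α, hα⟩ : ∃ α, (X, α) ∈ orthSet (L : Set (EP T q)) := by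
    cases q with
    | zero => exact absurd (Submodule.finrank_lt hne) (by omega)
    | succ m => exact exists_mem_orthSet hiso (hiso.disjoint_ker_fst (by omega)) X
  have hL : (L : Set (EP T q)) ⊂ orthSet (L : Set (EP T q)) :=
    (Set.ssubset_iff_of_subset fun e he l hl => hiso e he l hl).2 ⟨_, hα, fun h => hX ⟨_, h, rfl⟩⟩
  exact ⟨fun h => hX (h _ hα), hL, hL.ne⟩

theorem stmt1 [FiniteDimensional ℝ T] (q : ℕ) (hq : q + 1 ≤ finrank ℝ T)
    (L : Submodule ℝ (EP T q))
    (hiso : IsIsotropic (L : Set (EP T q)))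
    (hne : L.map (LinearMap.fst ℝ T (T [⋀^Fin (q+1)]→ₗ[ℝ] ℝ)) ≠ ⊤)
    (hdim : finrank ℝ T - (q+1) <
      finrank ℝ (L.map (LinearMap.fst ℝ T (T [⋀^Fin (q+1)]→ₗ[ℝ] ℝ)))) :
    (¬ ∀ e ∈ orthSet (L : Set (EP T q)),
        e.1 ∈ L.map (LinearMap.fst ℝ T (T [⋀^Fin (q+1)]→ₗ[ℝ] ℝ))) ∧
    (L : Set (EP T q)) ⊂ orthSet (L : Set (EP T q)) ∧
    (L : Set (EP T q)) ≠ orthSet (L : Set (EP T q)) :=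
  stmt1_general q L hiso hne hdim
end

section
/- Let L be a Lagrangian subspace of E^p and set S := pr_T(L). Then there exists an alternating (p+1)-form ω ∈ ⋀^{p+1} T* such that L = {(X, ι_X ω + α) : X ∈ S, α ∈ ⋀^p S°}. -/
open Module

variable {T : Type} [AddCommGroup T] [Module ℝ T]

/-!
Isotropy of `L` says that a linear section `ε` of `pr_T` over `S` is skew on `S`:
`ι_Y (ε X) = -ι_X (ε Y)` for `X, Y ∈ S`. Such a map agrees, modulo forms annihilated by `S`,
with `X ↦ ι_X ω` for a `(p+1)`-form `ω`, built by adding the vectors of a spanning set of `S`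
one at a time: if `ε` already vanishes modulo `S°` on `U` and `φ` is a functional with
`φ(U) = 0` and `φ(e) = 1`, then `φ ∧ ε(e)` corrects `ε` on `U + ℝe`. Finally `L` lies in the
isotropic space `{(X, ι_X ω + α)}`, which therefore lies in `L^⊥ = L`.
-/

namespace AlternatingMap

variable {R M N : Type*} [CommRing R] [AddCommGroup M] [Module R M] [AddCommGroup N]
  [Module R N] {n : ℕ}

theorem curryLeft_sub (f g : M [⋀^Fin n.succ]→ₗ[R] N) :
    (f - g).curryLeft = f.curryLeft - g.curryLeft :=
  map_sub curryLeftLinearMap f g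

theorem curryLeft_curryLeft_add_swap (f : M [⋀^Fin (n + 2)]→ₗ[R] N) (x y : M) :
    (f.curryLeft x).curryLeft y + (f.curryLeft y).curryLeft x = 0 := by
  simpa [curryLeft_same] using f.curryLeft_same (x + y)

def dualWedge (φ : M →ₗ[R] R) (μ : M [⋀^Fin n]→ₗ[R] N) : M [⋀^Fin (n + 1)]→ₗ[R] N :=
  alternatizeUncurryFin (φ.smulRight μ)

theorem curryLeft_dualWedge_of_curryLeft_eq_zero (φ : M →ₗ[R] R)
    {μ : M [⋀^Fin (n + 1)]→ₗ[R] N} {x : M} (hx : μ.curryLeft x = 0) :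
    (dualWedge φ μ).curryLeft x = φ x • μ := by
  ext w
  have hvanish (j : Fin (n + 1)) : μ (j.succ.removeNth (Matrix.vecCons x w)) = 0 := by
    rw [show j.succ.removeNth (Matrix.vecCons x w) = Matrix.vecCons x (j.removeNth w) by
      ext i; cases i using Fin.cases <;> simp [Fin.removeNth_apply]]
    exact congr($hx (j.removeNth w))
  simp [dualWedge, alternatizeUncurryFin_apply, Fin.sum_univ_succ, hvanish]

end AlternatingMap

open AlternatingMap

section SkewOn

variable {K V N : Type*} [Field K] [AddCommGroup V] [Module K V] [AddCommGroup N] [Module K N]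
  {n : ℕ}

def IsSkewOn (S : Submodule K V) (ε : V →ₗ[K] V [⋀^Fin (n + 1)]→ₗ[K] N) : Prop :=
  ∀ x ∈ S, ∀ y ∈ S, (ε x).curryLeft y + (ε y).curryLeft x = 0

namespace IsSkewOn

variable {S : Submodule K V} {ε : V →ₗ[K] V [⋀^Fin (n + 1)]→ₗ[K] N}

theorem sub_curryLeft (h : IsSkewOn S ε) (ω : V [⋀^Fin (n + 2)]→ₗ[K] N) :
    IsSkewOn S (ε - ω.curryLeft) := by
  intro x hx y hy
  simp only [LinearMap.sub_apply, curryLeft_sub]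
  rw [sub_add_sub_comm, h x hx y hy, ω.curryLeft_curryLeft_add_swap, sub_zero]

theorem curryLeft_self [NeZero (2 : K)] (h : IsSkewOn S ε) {x : V} (hx : x ∈ S) :
    (ε x).curryLeft x = 0 := by
  have h2 : (2 : K) • (ε x).curryLeft x = 0 := by rw [two_smul]; exact h x hx x hx
  exact (smul_eq_zero.mp h2).resolve_left two_ne_zero

theorem exists_curryLeft_eq_on_sup_span_singleton [NeZero (2 : K)] (h : IsSkewOn S ε)
    {U : Submodule K V} (hUS : U ≤ S) {e : V} (he : e ∈ S)
    (hU : ∀ x ∈ U, ∀ z ∈ S, (ε x).curryLeft z = 0) :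
    ∃ ω : V [⋀^Fin (n + 2)]→ₗ[K] N,
      ∀ x ∈ U ⊔ K ∙ e, ∀ z ∈ S, (ε x).curryLeft z = (ω.curryLeft x).curryLeft z := by
  by_cases heU : e ∈ U
  · refine ⟨0, fun x hx z hz => ?_⟩
    rw [sup_eq_left.mpr ((Submodule.span_singleton_le_iff_mem _ _).mpr heU)] at hx
    simp [hU x hx z hz]
  obtain ⟨φ, hφU, hφe⟩ := LinearMap.exists_extend_of_notMem (0 : U →ₗ[K] K) heU 1
  have hφ (u : V) (hu : u ∈ U) : φ u = 0 := congr($hφU ⟨u, hu⟩)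
  -- `ε e` is annihilated by `U ⊔ K ∙ e`, so `ι_x (φ ∧ ε e) = φ x • ε e` there.
  have hμ : ∀ x ∈ U ⊔ K ∙ e, (ε e).curryLeft x = 0 := by
    intro x hx
    obtain ⟨u, hu, y, hy, rfl⟩ := Submodule.mem_sup.mp hx
    obtain ⟨a, rfl⟩ := Submodule.mem_span_singleton.mp hy
    have hue : (ε e).curryLeft u = 0 := by
      simpa [hU u hu e he] using h u (hUS hu) e he
    simp [hue, h.curryLeft_self he]
  refine ⟨dualWedge φ (ε e), fun x hx z hz => ?_⟩
  rw [curryLeft_dualWedge_of_curryLeft_eq_zero φ (hμ x hx)]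
  obtain ⟨u, hu, y, hy, rfl⟩ := Submodule.mem_sup.mp hx
  obtain ⟨a, rfl⟩ := Submodule.mem_span_singleton.mp hy
  simp [hφ u hu, hφe, hU u hu z hz]

theorem exists_curryLeft_eq [NeZero (2 : K)] (h : IsSkewOn S ε) (hS : S.FG) :
    ∃ ω : V [⋀^Fin (n + 2)]→ₗ[K] N,
      ∀ x ∈ S, ∀ z ∈ S, (ε x).curryLeft z = (ω.curryLeft x).curryLeft z := by
  suffices ∀ U : Submodule K V, U.FG → U ≤ S → ∃ ω : V [⋀^Fin (n + 2)]→ₗ[K] N,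
      ∀ x ∈ U, ∀ z ∈ S, (ε x).curryLeft z = (ω.curryLeft x).curryLeft z from
    this S hS le_rfl
  intro U hU
  induction U, hU using Submodule.fg_sup_span_induction with
  | bot => exact fun _ => ⟨0, by simp⟩
  | sup U e _ ih =>
    intro hUS
    obtain ⟨ω, hω⟩ := ih (le_sup_left.trans hUS)
    have he : e ∈ S := hUS (Submodule.mem_sup_right (Submodule.mem_span_singleton_self e))
    obtain ⟨ω', hω'⟩ := (h.sub_curryLeft ω).exists_curryLeft_eq_on_sup_span_singleton
      (le_sup_left.trans hUS) he fun x hx z hz => by simp [curryLeft_sub, hω x hx z hz]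
    refine ⟨ω + ω', fun x hx z hz => ?_⟩
    have := hω' x hx z hz
    simp only [LinearMap.sub_apply, curryLeft_sub] at this
    simp only [curryLeft_add, LinearMap.add_apply, ← sub_eq_iff_eq_add', this]

end IsSkewOn

end SkewOn

theorem Submodule.exists_linearMap_mk_mem {K M N : Type*} [Field K] [AddCommGroup M] [Module K M]
    [AddCommGroup N] [Module K N] (L : Submodule K (M × N)) :
    ∃ ε : M →ₗ[K] N, ∀ x ∈ L.map (LinearMap.fst K M N), (x, ε x) ∈ L := by
  obtain ⟨g, hg⟩ := ((LinearMap.fst K M N).submoduleMap L).exists_rightInverse_of_surjective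
    (LinearMap.range_eq_top.mpr (LinearMap.submoduleMap_surjective _ _))
  obtain ⟨ε, hε⟩ := LinearMap.exists_extend ((LinearMap.snd K M N ∘ₗ L.subtype) ∘ₗ g)
  refine ⟨ε, fun x hx => ?_⟩
  convert (g ⟨x, hx⟩).2 using 1
  ext
  · exact congr(($hg ⟨x, hx⟩ : M)).symm
  · exact congr($hε ⟨x, hx⟩)


theorem orthSet_anti {q : ℕ} {s t : Set (EP T q)} (hst : s ⊆ t) : orthSet t ⊆ orthSet s :=
  fun _ he l hl => he l (hst hl)

theorem IsIsotropic.curryLeft_snd_eq {q : ℕ} {L : Set (EP T q)} (hL : IsIsotropic L)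
    {l l' m : EP T q} (hl : l ∈ L) (hl' : l' ∈ L) (hm : m ∈ L) (h₁ : l.1 = l'.1) :
    l.2.curryLeft m.1 = l'.2.curryLeft m.1 := by
  have h := hL l hl m hm
  rw [← hL l' hl' m hm, pairing, pairing, h₁] at h
  exact add_left_cancel h

def twistedGraph {q : ℕ} (S : Submodule ℝ T) (ω : T [⋀^Fin (q + 2)]→ₗ[ℝ] ℝ) : Set (EP T q) :=
  {e | ∃ X ∈ S, ∃ α : T [⋀^Fin (q + 1)]→ₗ[ℝ] ℝ,
    (∀ Z ∈ S, α.curryLeft Z = 0) ∧ e = (X, ω.curryLeft X + α)}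

theorem isIsotropic_twistedGraph {q : ℕ} (S : Submodule ℝ T) (ω : T [⋀^Fin (q + 2)]→ₗ[ℝ] ℝ) :
    IsIsotropic (twistedGraph S ω) := by
  rintro _ ⟨X, hX, α, hα, rfl⟩ _ ⟨Y, hY, β, hβ, rfl⟩
  simp only [pairing, curryLeft_add, LinearMap.add_apply, hα Y hY, hβ X hX, add_zero]
  exact ω.curryLeft_curryLeft_add_swap Y X

theorem subset_twistedGraph {q : ℕ} {L : Submodule ℝ (EP T q)} {ω : T [⋀^Fin (q + 2)]→ₗ[ℝ] ℝ}
    (hω : ∀ l ∈ L, ∀ Z ∈ L.map (LinearMap.fst ℝ T _),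
      l.2.curryLeft Z = (ω.curryLeft l.1).curryLeft Z) :
    (L : Set (EP T q)) ⊆ twistedGraph (L.map (LinearMap.fst ℝ T _)) ω := fun e he =>
  ⟨e.1, Submodule.mem_map_of_mem he, e.2 - ω.curryLeft e.1,
    fun Z hZ => by simp [curryLeft_sub, hω e he Z hZ], by simp⟩

theorem stmt2_general [FiniteDimensional ℝ T] (q : ℕ)
    (L : Submodule ℝ (EP T q))
    (hLag : (L : Set (EP T q)) = orthSet (L : Set (EP T q))) :
    ∃ ω : T [⋀^Fin (q+2)]→ₗ[ℝ] ℝ,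
      (L : Set (EP T q)) =
        {e : EP T q | ∃ X ∈ L.map (LinearMap.fst ℝ T (T [⋀^Fin (q+1)]→ₗ[ℝ] ℝ)),
          ∃ α : T [⋀^Fin (q+1)]→ₗ[ℝ] ℝ,
            (∀ Z ∈ L.map (LinearMap.fst ℝ T (T [⋀^Fin (q+1)]→ₗ[ℝ] ℝ)),
              α.curryLeft Z = 0) ∧
            e = (X, ω.curryLeft X + α)} := by
  set S := L.map (LinearMap.fst ℝ T (T [⋀^Fin (q+1)]→ₗ[ℝ] ℝ))
  have hL : IsIsotropic (L : Set (EP T q)) := fun e he => (hLag ▸ he : e ∈ orthSet _)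
  obtain ⟨ε, hε⟩ := L.exists_linearMap_mk_mem
  have hskew : IsSkewOn S ε := fun x hx y hy => hL _ (hε y hy) _ (hε x hx)
  obtain ⟨ω, hω⟩ := hskew.exists_curryLeft_eq (IsNoetherian.noetherian S)
  have hLω : ∀ l ∈ L, ∀ Z ∈ S, l.2.curryLeft Z = (ω.curryLeft l.1).curryLeft Z := by
    rintro l hl _ ⟨m, hm, rfl⟩
    have hl₁ : l.1 ∈ S := Submodule.mem_map_of_mem hl
    exact (hL.curryLeft_snd_eq hl (hε l.1 hl₁) hm rfl).trans
      (hω l.1 hl₁ m.1 (Submodule.mem_map_of_mem hm))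
  refine ⟨ω, (subset_twistedGraph hLω).antisymm ?_⟩
  calc twistedGraph S ω ⊆ orthSet (twistedGraph S ω) := isIsotropic_twistedGraph S ω
    _ ⊆ orthSet L := orthSet_anti (subset_twistedGraph hLω)
    _ = L := hLag.symm

theorem stmt2 [FiniteDimensional ℝ T] (q : ℕ) (hq : q + 1 ≤ finrank ℝ T)
    (L : Submodule ℝ (EP T q))
    (hLag : (L : Set (EP T q)) = orthSet (L : Set (EP T q))) :
    ∃ ω : T [⋀^Fin (q+2)]→ₗ[ℝ] ℝ,
      (L : Set (EP T q)) =
        {e : EP T q | ∃ X ∈ L.map (LinearMap.fst ℝ T (T [⋀^Fin (q+1)]→ₗ[ℝ] ℝ)),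
          ∃ α : T [⋀^Fin (q+1)]→ₗ[ℝ] ℝ,
            (∀ Z ∈ L.map (LinearMap.fst ℝ T (T [⋀^Fin (q+1)]→ₗ[ℝ] ℝ)),
              α.curryLeft Z = 0) ∧
            e = (X, ω.curryLeft X + α)} :=
  stmt2_general q L hLag
end

section
/- Let S₁, S₂ ⊆ T be subspaces, each satisfying (dim Sᵢ ≤ dim T − p or Sᵢ = T), and let ω₁, ω₂ ∈ ⋀^{p+1} T*. If the two subspaces {(X, ι_X ω₁ + α) : X ∈ S₁, α ∈ ⋀^p S₁°} and {(X, ι_X ω₂ + α) : X ∈ S₂, α ∈ ⋀^p S₂°} of E^p are equal, then S₁ = S₂ and ω₁(X, Y, v₁, …, v_{p−1}) = ω₂(X, Y, v₁, …, v_{p−1}) for all X, Y ∈ S₁ and all v₁, …, v_{p−1} ∈ T. -/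
open Module

variable {T : Type} [AddCommGroup T] [Module ℝ T]

namespace AlternatingMap

variable {R M N : Type*} [CommRing R] [AddCommGroup M] [Module R M] [AddCommGroup N] [Module R N]
  {n : ℕ}

def twistedGraph (S : Submodule R M) (ω : M [⋀^Fin (n + 2)]→ₗ[R] N) :
    Set (M × (M [⋀^Fin (n + 1)]→ₗ[R] N)) :=
  {e | ∃ X ∈ S, ∃ α : M [⋀^Fin (n + 1)]→ₗ[R] N,
    (∀ Z ∈ S, α.curryLeft Z = 0) ∧ e = (X, ω.curryLeft X + α)}

theorem mk_curryLeft_mem_twistedGraph {S : Submodule R M} {ω : M [⋀^Fin (n + 2)]→ₗ[R] N}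
    {X : M} (hX : X ∈ S) : (X, ω.curryLeft X) ∈ twistedGraph S ω :=
  ⟨X, hX, 0, fun _ _ => by rw [curryLeft_zero, LinearMap.zero_apply], by rw [add_zero]⟩

variable {S₁ S₂ : Submodule R M} {ω₁ ω₂ : M [⋀^Fin (n + 2)]→ₗ[R] N}

theorem exists_curryLeft_eq_of_twistedGraph_subset
    (h : twistedGraph S₁ ω₁ ⊆ twistedGraph S₂ ω₂) {X : M} (hX : X ∈ S₁) :
    X ∈ S₂ ∧ ∃ α : M [⋀^Fin (n + 1)]→ₗ[R] N,
      (∀ Z ∈ S₂, α.curryLeft Z = 0) ∧ ω₁.curryLeft X = ω₂.curryLeft X + α := by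
  obtain ⟨X', hX', α, hα, he⟩ := h (mk_curryLeft_mem_twistedGraph hX)
  obtain ⟨rfl, hω⟩ := Prod.mk.inj he
  exact ⟨hX', α, hα, hω⟩

theorem le_of_twistedGraph_subset (h : twistedGraph S₁ ω₁ ⊆ twistedGraph S₂ ω₂) : S₁ ≤ S₂ :=
  fun _ hX => (exists_curryLeft_eq_of_twistedGraph_subset h hX).1

theorem curryLeft_curryLeft_eq_of_twistedGraph_subset
    (h : twistedGraph S₁ ω₁ ⊆ twistedGraph S₂ ω₂) {X Y : M} (hX : X ∈ S₁) (hY : Y ∈ S₂) :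
    (ω₁.curryLeft X).curryLeft Y = (ω₂.curryLeft X).curryLeft Y := by
  obtain ⟨-, α, hα, hω⟩ := exists_curryLeft_eq_of_twistedGraph_subset h hX
  rw [hω, curryLeft_add, LinearMap.add_apply, hα Y hY, add_zero]

end AlternatingMap

theorem stmt4_general (q : ℕ)
    (S₁ S₂ : Submodule ℝ T)
    (ω₁ ω₂ : T [⋀^Fin (q+2)]→ₗ[ℝ] ℝ)
    (heq : {e : EP T q | ∃ X ∈ S₁, ∃ α : T [⋀^Fin (q+1)]→ₗ[ℝ] ℝ,
        (∀ Z ∈ S₁, α.curryLeft Z = 0) ∧ e = (X, ω₁.curryLeft X + α)} =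
      {e : EP T q | ∃ X ∈ S₂, ∃ α : T [⋀^Fin (q+1)]→ₗ[ℝ] ℝ,
        (∀ Z ∈ S₂, α.curryLeft Z = 0) ∧ e = (X, ω₂.curryLeft X + α)}) :
    S₁ = S₂ ∧
    ∀ X ∈ S₁, ∀ Y ∈ S₁, ∀ v : Fin q → T,
      ((ω₁.curryLeft X).curryLeft Y) v = ((ω₂.curryLeft X).curryLeft Y) v := by
  change AlternatingMap.twistedGraph S₁ ω₁ = AlternatingMap.twistedGraph S₂ ω₂ at heq
  have hS : S₁ = S₂ :=
    le_antisymm (AlternatingMap.le_of_twistedGraph_subset heq.le)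
      (AlternatingMap.le_of_twistedGraph_subset heq.ge)
  refine ⟨hS, fun X hX Y hY v => ?_⟩
  rw [AlternatingMap.curryLeft_curryLeft_eq_of_twistedGraph_subset heq.le hX (hS ▸ hY)]

theorem stmt4 [FiniteDimensional ℝ T] (q : ℕ) (hq : q + 1 ≤ finrank ℝ T)
    (S₁ S₂ : Submodule ℝ T)
    (hS₁ : finrank ℝ S₁ ≤ finrank ℝ T - (q+1) ∨ S₁ = ⊤)
    (hS₂ : finrank ℝ S₂ ≤ finrank ℝ T - (q+1) ∨ S₂ = ⊤)
    (ω₁ ω₂ : T [⋀^Fin (q+2)]→ₗ[ℝ] ℝ)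
    (heq : {e : EP T q | ∃ X ∈ S₁, ∃ α : T [⋀^Fin (q+1)]→ₗ[ℝ] ℝ,
        (∀ Z ∈ S₁, α.curryLeft Z = 0) ∧ e = (X, ω₁.curryLeft X + α)} =
      {e : EP T q | ∃ X ∈ S₂, ∃ α : T [⋀^Fin (q+1)]→ₗ[ℝ] ℝ,
        (∀ Z ∈ S₂, α.curryLeft Z = 0) ∧ e = (X, ω₂.curryLeft X + α)}) :
    S₁ = S₂ ∧
    ∀ X ∈ S₁, ∀ Y ∈ S₁, ∀ v : Fin q → T,
      ((ω₁.curryLeft X).curryLeft Y) v = ((ω₂.curryLeft X).curryLeft Y) v :=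
  stmt4_general q S₁ S₂ ω₁ ω₂ heq
end

section
/- Let B : T → ⋀^p T* be a linear map. The subspace L := {(X, B X) : X ∈ T} of E^p is isotropic if and only if there exists an alternating (p+1)-form ω ∈ ⋀^{p+1} T* such that B X = −ι_X ω for all X ∈ T. -/
/-!
Isotropy of the graph of `B` says that the bilinear map `(X, Y) ↦ ι_Y (B X)` is antisymmetric,
i.e. (as `2` is invertible) that `ι_X (B X) = 0` for all `X`. Conversely, under this condition
`(X, v) ↦ B X v` is alternating in all `p + 1` arguments: it is alternating in `v`, and it vanishes
when `X` occurs among the `v`, since `X` can be moved to the front of `v` at the cost of a sign.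
Its contraction with `X` is `B X`, and `ω` is its negative.
-/

open Module

variable {T : Type} [AddCommGroup T] [Module ℝ T]

namespace LinearMap

variable {R M₁ M : Type*} [CommRing R] [AddCommGroup M₁] [Module R M₁] [AddCommGroup M] [Module R M]

theorem isAlt_iff_forall_add_swap_eq_zero [Invertible (2 : R)] {B : M₁ →ₗ[R] M₁ →ₗ[R] M} :
    B.IsAlt ↔ ∀ x y, B x y + B y x = 0 := by
  refine ⟨fun h x y ↦ by rw [← h.neg, neg_add_cancel], fun h x ↦ ?_⟩
  have h2 : (2 : R) • B x x = 0 := by rw [two_smul, h]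
  simpa using congrArg ((⅟2 : R) • ·) h2

end LinearMap

namespace AlternatingMap

variable {R M N : Type*} [CommRing R] [AddCommGroup M] [Module R M] [AddCommGroup N] [Module R N]
  {n : ℕ}

theorem curryLeft_neg (f : M [⋀^Fin (n + 1)]→ₗ[R] N) : (-f).curryLeft = -f.curryLeft :=
  map_neg curryLeftLinearMap f

theorem map_eq_zero_of_curryLeft_eq_zero (f : M [⋀^Fin (n + 1)]→ₗ[R] N) {x : M}
    (hx : f.curryLeft x = 0) {v : Fin (n + 1) → M} {k : Fin (n + 1)} (hk : v k = x) :
    f v = 0 := by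
  rw [← k.insertNth_self_removeNth v, hk, map_insertNth, ← curryLeft_apply_apply, hx,
    zero_apply, smul_zero]

def uncurryLeft (f : M →ₗ[R] M [⋀^Fin (n + 1)]→ₗ[R] N) (hf : ∀ x, (f x).curryLeft x = 0) :
    M [⋀^Fin (n + 2)]→ₗ[R] N where
  toMultilinearMap := (toMultilinearMapLM ∘ₗ f).uncurryLeft
  map_eq_zero_of_eq' v i j hv hij := by
    change f (v 0) (Fin.tail v) = 0
    cases i using Fin.cases with
    | zero =>
      obtain ⟨j, rfl⟩ := Fin.exists_succ_eq.2 hij.symm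
      exact map_eq_zero_of_curryLeft_eq_zero _ (hf _) hv.symm
    | succ i =>
      cases j using Fin.cases with
      | zero => exact map_eq_zero_of_curryLeft_eq_zero _ (hf _) hv
      | succ j => exact (f (v 0)).map_eq_zero_of_eq _ hv (ne_of_apply_ne Fin.succ hij)

@[simp]
theorem curryLeft_uncurryLeft (f : M →ₗ[R] M [⋀^Fin (n + 1)]→ₗ[R] N)
    (hf : ∀ x, (f x).curryLeft x = 0) : (uncurryLeft f hf).curryLeft = f := by
  ext x v
  simp [uncurryLeft]

theorem exists_curryLeft_eq_iff (f : M →ₗ[R] M [⋀^Fin (n + 1)]→ₗ[R] N) :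
    (∃ ω : M [⋀^Fin (n + 2)]→ₗ[R] N, ω.curryLeft = f) ↔ (curryLeftLinearMap ∘ₗ f).IsAlt := by
  refine ⟨?_, fun hf ↦ ⟨uncurryLeft f hf, curryLeft_uncurryLeft f hf⟩⟩
  rintro ⟨ω, rfl⟩ x
  exact curryLeft_same ω x

end AlternatingMap

theorem isIsotropic_graph_iff {q : ℕ} (B : T →ₗ[ℝ] (T [⋀^Fin (q+1)]→ₗ[ℝ] ℝ)) :
    IsIsotropic {e : EP T q | ∃ X : T, e = (X, B X)} ↔
      ∀ X Y, (B X).curryLeft Y + (B Y).curryLeft X = 0 := by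
  refine ⟨fun h X Y ↦ h (Y, B Y) ⟨Y, rfl⟩ (X, B X) ⟨X, rfl⟩, ?_⟩
  rintro h _ ⟨X, rfl⟩ _ ⟨Y, rfl⟩
  exact h Y X

theorem stmt8_general (q : ℕ)
    (B : T →ₗ[ℝ] (T [⋀^Fin (q+1)]→ₗ[ℝ] ℝ)) :
    IsIsotropic {e : EP T q | ∃ X : T, e = (X, B X)} ↔
      ∃ ω : T [⋀^Fin (q+2)]→ₗ[ℝ] ℝ, ∀ X : T, B X = -(ω.curryLeft X) := by
  rw [isIsotropic_graph_iff]
  refine (LinearMap.isAlt_iff_forall_add_swap_eq_zero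
    (B := AlternatingMap.curryLeftLinearMap ∘ₗ B)).symm.trans ?_
  rw [← AlternatingMap.exists_curryLeft_eq_iff]
  refine (Equiv.neg _).exists_congr fun ω ↦ ?_
  simp only [LinearMap.ext_iff, Equiv.neg_apply, AlternatingMap.curryLeft_neg,
    LinearMap.neg_apply, neg_neg, eq_comm]

theorem stmt8 [FiniteDimensional ℝ T] (q : ℕ) (hq : q + 1 ≤ finrank ℝ T)
    (B : T →ₗ[ℝ] (T [⋀^Fin (q+1)]→ₗ[ℝ] ℝ)) :
    IsIsotropic {e : EP T q | ∃ X : T, e = (X, B X)} ↔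
      ∃ ω : T [⋀^Fin (q+2)]→ₗ[ℝ] ℝ, ∀ X : T, B X = -(ω.curryLeft X) :=
  stmt8_general q B
end

section
/- Let n be an integer with 3 ≤ n ≤ dim T − 1, and let A : ⋀^{n−1} T* → T be a linear map such that for all α, β ∈ ⋀^{n−1} T* one has ι_{A α} β + ι_{A β} α = 0 in ⋀^{n−2} T* (i.e. the graph {(A α, α) : α ∈ ⋀^{n−1} T*} is an isotropic subspace of E^{n−1} = T ⊕ ⋀^{n−1} T*). Then A = 0. -/
/-!
Fix a basis `e` and write `e^σ = e^{σ 0} ∧ ⋯ ∧ e^{σ (k+1)}`. For injective `σ`, contracting `e^σ`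
with `Y` and evaluating at `e_{σ 1}, …, e_{σ (k+1)}` gives the `σ 0`-coordinate of `Y`, so isotropy
tested against `β = e^σ` says `(A α)_{σ 0} = -ι_{A e^σ} α (e_{σ 1}, …, e_{σ (k+1)})`.
For `α = e^τ` and `σ 1 ∉ range τ` the right side vanishes, and since `σ 0` is arbitrary,
`A e^τ = 0`; this needs `k + 4` basis vectors. Then the right side vanishes for every `α`,
hence `A α = 0`.
-/

open Module

theorem exists_injective_fin_forall_notMem {ι : Type*} [Fintype ι] [DecidableEq ι]
    (s : Finset ι) {k : ℕ} (h : s.card + k ≤ Fintype.card ι) :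
    ∃ g : Fin k → ι, Function.Injective g ∧ ∀ l, g l ∉ s := by
  have hcard : Fintype.card (Fin k) ≤ Fintype.card {y // y ∉ s} := by
    rw [Fintype.card_subtype_compl, Fintype.card_coe, Fintype.card_fin]
    omega
  obtain ⟨f⟩ := Function.Embedding.nonempty_of_card_le hcard
  exact ⟨Subtype.val ∘ f, Subtype.val_injective.comp f.injective, fun l => (f l).2⟩

namespace Module.Basis

variable {R M ι : Type*} [CommRing R] [AddCommGroup M] [Module R M] (e : Basis ι R M)

/-- The form `e^{σ 0} ∧ ⋯ ∧ e^{σ (n-1)}`, where `e^i` are the coordinate functions of `e`. -/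
noncomputable def wedgeCoord {n : ℕ} (σ : Fin n → ι) : M [⋀^Fin n]→ₗ[R] R :=
  Matrix.detRowAlternating.compLinearMap (LinearMap.pi fun i => e.coord (σ i))

variable {e} {n : ℕ}

theorem wedgeCoord_apply (σ : Fin n → ι) (v : Fin n → M) :
    e.wedgeCoord σ v = (Matrix.of fun l i => e.coord (σ i) (v l)).det :=
  rfl

theorem wedgeCoord_apply_eq_zero_of_notMem_range {σ : Fin n → ι} {v : Fin n → M} {l : Fin n}
    {b : ι} (hb : b ∉ Set.range σ) (hv : v l = e b) : e.wedgeCoord σ v = 0 := by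
  classical
  rw [wedgeCoord_apply]
  refine Matrix.det_eq_zero_of_row_eq_zero l fun i => ?_
  simp only [Matrix.of_apply, hv, coord_apply, repr_self, Finsupp.single_apply]
  exact if_neg fun h => hb ⟨i, h.symm⟩

theorem wedgeCoord_apply_self {σ : Fin n → ι} (hσ : Function.Injective σ) :
    e.wedgeCoord σ (e ∘ σ) = 1 := by
  classical
  rw [wedgeCoord_apply, ← Matrix.det_one (n := Fin n) (R := R)]
  congr 1
  ext l i
  simp [coord_apply, Finsupp.single_apply, Matrix.one_apply, hσ.eq_iff]

theorem wedgeCoord_curryLeft_apply_tail {σ : Fin (n + 1) → ι} (hσ : Function.Injective σ)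
    (Y : M) : (e.wedgeCoord σ).curryLeft Y (e ∘ Fin.tail σ) = e.repr Y (σ 0) := by
  classical
  have hbasis (j : ι) :
      (e.wedgeCoord σ).curryLeft (e j) (e ∘ Fin.tail σ) = e.coord (σ 0) (e j) := by
    rw [AlternatingMap.curryLeft_apply_apply, Matrix.vecCons, ← Fin.comp_cons]
    by_cases hj0 : j = σ 0
    · rw [hj0, Fin.cons_self_tail, wedgeCoord_apply_self hσ, coord_apply, repr_self,
        Finsupp.single_eq_same]
    rw [coord_apply, repr_self, Finsupp.single_apply, if_neg hj0]
    by_cases hj : j ∈ Set.range σ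
    · obtain ⟨i, rfl⟩ := hj
      have hi : i ≠ 0 := fun h => hj0 (congrArg σ h)
      obtain ⟨l, rfl⟩ := Fin.exists_succ_eq.mpr hi
      exact (e.wedgeCoord σ).map_eq_zero_of_eq _ (i := 0) (j := l.succ) rfl
        (Fin.succ_ne_zero l).symm
    · exact wedgeCoord_apply_eq_zero_of_notMem_range hj (l := 0) rfl
  let f : M →ₗ[R] R :=
    { toFun Y := (e.wedgeCoord σ).curryLeft Y (e ∘ Fin.tail σ)
      map_add' Y Z := by simp
      map_smul' c Y := by simp }
  exact LinearMap.congr_fun (e.ext (f₁ := f) (f₂ := e.coord (σ 0)) hbasis) Y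

end Module.Basis

section IsotropicGraph

variable {R M : Type*} [CommRing R] [AddCommGroup M] [Module R M] {k : ℕ}

def IsIsotropicGraph (A : (M [⋀^Fin (k + 1)]→ₗ[R] R) → M) : Prop :=
  ∀ α β : M [⋀^Fin (k + 1)]→ₗ[R] R, β.curryLeft (A α) + α.curryLeft (A β) = 0

namespace IsIsotropicGraph

variable {ι : Type*}

theorem repr_apply_add_curryLeft_eq_zero {A : (M [⋀^Fin (k + 1)]→ₗ[R] R) → M}
    (hA : IsIsotropicGraph A) (e : Basis ι R M) {σ : Fin (k + 1) → ι}
    (hσ : Function.Injective σ) (α : M [⋀^Fin (k + 1)]→ₗ[R] R) :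
    e.repr (A α) (σ 0) + α.curryLeft (A (e.wedgeCoord σ)) (e ∘ Fin.tail σ) = 0 := by
  simpa [Basis.wedgeCoord_curryLeft_apply_tail hσ] using
    congrArg (· (e ∘ Fin.tail σ)) (hA α (e.wedgeCoord σ))

variable [Fintype ι] [DecidableEq ι] {A : (M [⋀^Fin (k + 2)]→ₗ[R] R) → M}

theorem apply_wedgeCoord_eq_zero (hA : IsIsotropicGraph A) (e : Basis ι R M)
    (hk : k + 4 ≤ Fintype.card ι) (τ : Fin (k + 2) → ι) : A (e.wedgeCoord τ) = 0 := by
  refine e.ext_elem fun j => ?_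
  rw [map_zero, Finsupp.zero_apply]
  obtain ⟨x, -, hx⟩ := Finset.exists_mem_notMem_of_card_lt_card
    (s := insert j (Finset.univ.image τ)) (t := Finset.univ) (by
      grw [Finset.card_insert_le, Finset.card_image_le, Finset.card_univ, Finset.card_univ,
        Fintype.card_fin]
      omega)
  rw [Finset.mem_insert, not_or, Finset.mem_image, not_exists] at hx
  obtain ⟨g, hg, hgjx⟩ := exists_injective_fin_forall_notMem {j, x} (k := k)
    (by grw [Finset.card_le_two]; omega)
  have hσ : Function.Injective (Fin.cons j (Fin.cons x g) : Fin (k + 2) → ι) := by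
    simp_all [Fin.cons_injective_iff, Fin.range_cons, eq_comm]
  have h := hA.repr_apply_add_curryLeft_eq_zero e hσ (e.wedgeCoord τ)
  rwa [Fin.cons_zero, AlternatingMap.curryLeft_apply_apply,
    Basis.wedgeCoord_apply_eq_zero_of_notMem_range (l := 1) (b := x) (by simpa using hx.2) rfl,
    add_zero] at h

theorem eq_zero (hA : IsIsotropicGraph A) (e : Basis ι R M) (hk : k + 4 ≤ Fintype.card ι)
    (α : M [⋀^Fin (k + 2)]→ₗ[R] R) : A α = 0 := by
  refine e.ext_elem fun j => ?_
  obtain ⟨g, hg, hgj⟩ := exists_injective_fin_forall_notMem {j} (k := k + 1)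
    (by rw [Finset.card_singleton]; omega)
  have hσ : Function.Injective (Fin.cons j g : Fin (k + 2) → ι) :=
    Fin.cons_injective_iff.mpr ⟨fun ⟨l, hl⟩ => hgj l (by simp [hl]), hg⟩
  have h := hA.repr_apply_add_curryLeft_eq_zero e hσ α
  rw [hA.apply_wedgeCoord_eq_zero e hk, map_zero, AlternatingMap.zero_apply, add_zero,
    Fin.cons_zero] at h
  rwa [map_zero, Finsupp.zero_apply]

end IsIsotropicGraph

end IsotropicGraph

/-- STATEMENT 9, with `n = m + 3` (so the hypothesis `3 ≤ n` is automatic):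
if `A : ⋀^{n-1} T* → T` is linear and its graph in `E^{n-1} = T ⊕ ⋀^{n-1} T*` is
isotropic, i.e. `ι_{Aα} β + ι_{Aβ} α = 0` for all `α β`, and `3 ≤ n ≤ dim T - 1`,
then `A = 0`. -/
theorem stmt9 {T : Type} [AddCommGroup T] [Module ℝ T] [FiniteDimensional ℝ T]
    (m : ℕ) (hn : m + 3 ≤ finrank ℝ T - 1)
    (A : (T [⋀^Fin (m+2)]→ₗ[ℝ] ℝ) →ₗ[ℝ] T)
    (hiso : ∀ α β : T [⋀^Fin (m+2)]→ₗ[ℝ] ℝ,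
      β.curryLeft (A α) + α.curryLeft (A β) = 0) :
    A = 0 :=
  LinearMap.ext <|
    IsIsotropicGraph.eq_zero hiso (finBasis ℝ T) (by rw [Fintype.card_fin]; omega)
end

section
/- Let σ be a closed smooth 2-form on E. On pairs (X, f) consisting of a smooth vector field X on E and a smooth function f : E → ℝ, define the σ-twisted bracket [(X,f),(Y,g)]_σ := ([X,Y], X·g − Y·f + σ(X,Y)). Then this bracket satisfies the Jacobi identity: for all smooth vector fields X, Y, Z on E and all smooth functions f, g, h : E → ℝ, [(X,f),[(Y,g),(Z,h)]_σ]_σ + [(Y,g),[(Z,h),(X,f)]_σ]_σ + [(Z,h),[(X,f),(Y,g)]_σ]_σ = (0, 0). -/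
noncomputable section

variable {E : Type*} [NormedAddCommGroup E] [NormedSpace ℝ E] [FiniteDimensional ℝ E]

/-- Lie bracket of vector fields on `E`: `[X,Y](x) = DY(x)(X(x)) − DX(x)(Y(x))`. -/
def lieVF (X Y : E → E) : E → E :=
  fun x => fderiv ℝ Y x (X x) - fderiv ℝ X x (Y x)

/-- Action of a vector field on a function: `(X·g)(x) = Dg(x)(X(x))`. -/
def actVF (X : E → E) (g : E → ℝ) : E → ℝ :=
  fun x => fderiv ℝ g x (X x)

/-- A smooth 2-form `σ` is closed if
`(Dσ(x)u)(v,w) − (Dσ(x)v)(u,w) + (Dσ(x)w)(u,v) = 0`. -/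
def IsClosed2Form (σ : E → E →L[ℝ] E →L[ℝ] ℝ) : Prop :=
  ∀ x u v w : E,
    fderiv ℝ σ x u v w - fderiv ℝ σ x v u w + fderiv ℝ σ x w u v = 0

/-- The σ-twisted bracket `[(X,f),(Y,g)]_σ = ([X,Y], X·g − Y·f + σ(X,Y))`. -/
def twBr (σ : E → E →L[ℝ] E →L[ℝ] ℝ) (p q : (E → E) × (E → ℝ)) :
    (E → E) × (E → ℝ) :=
  (lieVF p.1 q.1,
   fun x => actVF p.1 q.2 x - actVF q.1 p.2 x + σ x (p.1 x) (q.1 x))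

section Helpers

set_option linter.unusedSectionVars false

variable {F : Type*} [NormedAddCommGroup F] [NormedSpace ℝ F]

lemma fd_ev (W : E → F) (hW : ContDiff ℝ (⊤ : ℕ∞) W) (V : E → E) (hV : ContDiff ℝ (⊤ : ℕ∞) V) (x v : E) :
    fderiv ℝ (fun y => fderiv ℝ W y (V y)) x v =
      fderiv ℝ W x (fderiv ℝ V x v) + fderiv ℝ (fderiv ℝ W) x v (V x) := by
  rw [fderiv_clm_apply ((hW.fderiv_right (m := (⊤ : ℕ∞)) (by simp)).differentiable (by simp)).differentiableAt
      (hV.differentiable (by simp)).differentiableAt]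
  simp

lemma diff_ev (W : E → F) (hW : ContDiff ℝ (⊤ : ℕ∞) W) (V : E → E) (hV : ContDiff ℝ (⊤ : ℕ∞) V) (x : E) :
    DifferentiableAt ℝ (fun y => fderiv ℝ W y (V y)) x :=
  (((hW.fderiv_right (m := (⊤ : ℕ∞)) (by simp)).differentiable (by simp)).differentiableAt).clm_apply
    (hV.differentiable (by simp)).differentiableAt

lemma fd_sigma (σ : E → E →L[ℝ] E →L[ℝ] ℝ) (hσ : ContDiff ℝ (⊤ : ℕ∞) σ)
    (V W : E → E) (hV : ContDiff ℝ (⊤ : ℕ∞) V) (hW : ContDiff ℝ (⊤ : ℕ∞) W) (x v : E) :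
    fderiv ℝ (fun y => σ y (V y) (W y)) x v =
      σ x (V x) (fderiv ℝ W x v) + σ x (fderiv ℝ V x v) (W x)
        + fderiv ℝ σ x v (V x) (W x) := by
  have h1 : DifferentiableAt ℝ (fun y => σ y (V y)) x :=
    ((hσ.differentiable (by simp)).differentiableAt).clm_apply
      (hV.differentiable (by simp)).differentiableAt
  rw [fderiv_clm_apply h1 (hW.differentiable (by simp)).differentiableAt,
    fderiv_clm_apply ((hσ.differentiable (by simp)).differentiableAt)
      (hV.differentiable (by simp)).differentiableAt]
  simp
  ring

lemma diff_sigma (σ : E → E →L[ℝ] E →L[ℝ] ℝ) (hσ : ContDiff ℝ (⊤ : ℕ∞) σ)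
    (V W : E → E) (hV : ContDiff ℝ (⊤ : ℕ∞) V) (hW : ContDiff ℝ (⊤ : ℕ∞) W) (x : E) :
    DifferentiableAt ℝ (fun y => σ y (V y) (W y)) x :=
  (((hσ.differentiable (by simp)).differentiableAt).clm_apply
    (hV.differentiable (by simp)).differentiableAt).clm_apply
    (hW.differentiable (by simp)).differentiableAt

lemma fd_pt (σ : E → E →L[ℝ] E →L[ℝ] ℝ) (hσ : ContDiff ℝ (⊤ : ℕ∞) σ) (u v x w : E) :
    fderiv ℝ (fun y => σ y u v) x w = fderiv ℝ σ x w u v := by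
  have h1 : DifferentiableAt ℝ (fun y => σ y u) x :=
    ((hσ.differentiable (by simp)).differentiableAt).clm_apply (differentiableAt_const u)
  rw [fderiv_clm_apply h1 (differentiableAt_const v),
    fderiv_clm_apply ((hσ.differentiable (by simp)).differentiableAt) (differentiableAt_const u)]
  simp

lemma fd_alt (σ : E → E →L[ℝ] E →L[ℝ] ℝ) (hσ : ContDiff ℝ (⊤ : ℕ∞) σ)
    (halt : ∀ x u v : E, σ x u v = - σ x v u) (x w u v : E) :
    fderiv ℝ σ x w u v = - fderiv ℝ σ x w v u := by
  rw [← fd_pt σ hσ u v x w, ← fd_pt σ hσ v u x w]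
  have h : (fun y => σ y u v) = fun y => -(σ y v u) := funext fun y => halt y u v
  rw [h, fderiv_fun_neg]
  simp

lemma symm2 (W : E → F) (hW : ContDiff ℝ (⊤ : ℕ∞) W) (x u v : E) :
    fderiv ℝ (fderiv ℝ W) x u v = fderiv ℝ (fderiv ℝ W) x v u :=
  (hW.contDiffAt.isSymmSndFDerivAt (by rw [minSmoothness_of_isRCLikeNormedField]; exact WithTop.coe_le_coe.mpr (le_top : (2 : ℕ∞) ≤ ⊤))) u v

end Helpers

theorem stmt10 (σ : E → E →L[ℝ] E →L[ℝ] ℝ) (hσ : ContDiff ℝ (⊤ : ℕ∞) σ)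
    (halt : ∀ x u v : E, σ x u v = - σ x v u)
    (hclosed : IsClosed2Form σ)
    (X Y Z : E → E) (hX : ContDiff ℝ (⊤ : ℕ∞) X) (hY : ContDiff ℝ (⊤ : ℕ∞) Y) (hZ : ContDiff ℝ (⊤ : ℕ∞) Z)
    (f g h : E → ℝ) (hf : ContDiff ℝ (⊤ : ℕ∞) f) (hg : ContDiff ℝ (⊤ : ℕ∞) g) (hh : ContDiff ℝ (⊤ : ℕ∞) h) :
    twBr σ (X, f) (twBr σ (Y, g) (Z, h)) +
      twBr σ (Y, g) (twBr σ (Z, h) (X, f)) +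
      twBr σ (Z, h) (twBr σ (X, f) (Y, g)) = (0, 0) := by
  simp only [twBr, lieVF, actVF, Prod.mk_add_mk, Prod.mk.injEq]
  constructor
  · funext x
    simp only [Pi.add_apply, Pi.zero_apply]
    delta lieVF
    rw [fderiv_fun_sub (diff_ev Z hZ Y hY x) (diff_ev Y hY Z hZ x),
        fderiv_fun_sub (diff_ev X hX Z hZ x) (diff_ev Z hZ X hX x),
        fderiv_fun_sub (diff_ev Y hY X hX x) (diff_ev X hX Y hY x)]
    simp only [ContinuousLinearMap.sub_apply, fd_ev Z hZ Y hY, fd_ev Y hY Z hZ,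
      fd_ev X hX Z hZ, fd_ev Z hZ X hX, fd_ev Y hY X hX, fd_ev X hX Y hY, map_sub]
    rw [symm2 X hX x (Y x) (Z x), symm2 Y hY x (Z x) (X x), symm2 Z hZ x (X x) (Y x)]
    abel
  · funext x
    have d1 : ∀ (P Q : E → E) (p : E → ℝ), ContDiff ℝ (⊤ : ℕ∞) P → ContDiff ℝ (⊤ : ℕ∞) Q →
        ContDiff ℝ (⊤ : ℕ∞) p →
        DifferentiableAt ℝ (fun y => fderiv ℝ p y (P y) - fderiv ℝ p y (Q y)) x :=
      fun P Q p hP hQ hp => (diff_ev p hp P hP x).sub (diff_ev p hp Q hQ x)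
    simp only [Pi.add_apply, Pi.zero_apply]
    rw [fderiv_fun_add ((diff_ev h hh Y hY x).fun_sub (diff_ev g hg Z hZ x))
          (diff_sigma σ hσ Y Z hY hZ x),
        fderiv_fun_add ((diff_ev f hf Z hZ x).fun_sub (diff_ev h hh X hX x))
          (diff_sigma σ hσ Z X hZ hX x),
        fderiv_fun_add ((diff_ev g hg X hX x).fun_sub (diff_ev f hf Y hY x))
          (diff_sigma σ hσ X Y hX hY x),
        fderiv_fun_sub (diff_ev h hh Y hY x) (diff_ev g hg Z hZ x),
        fderiv_fun_sub (diff_ev f hf Z hZ x) (diff_ev h hh X hX x),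
        fderiv_fun_sub (diff_ev g hg X hX x) (diff_ev f hf Y hY x)]
    simp only [ContinuousLinearMap.add_apply, ContinuousLinearMap.sub_apply,
      fd_ev h hh Y hY, fd_ev g hg Z hZ, fd_ev f hf Z hZ, fd_ev h hh X hX,
      fd_ev g hg X hX, fd_ev f hf Y hY,
      fd_sigma σ hσ Y Z hY hZ, fd_sigma σ hσ Z X hZ hX, fd_sigma σ hσ X Y hX hY,
      map_sub, Pi.add_apply, Pi.ofNat_apply]
    have hc := hclosed x (X x) (Y x) (Z x)
    have ha1 := fd_alt σ hσ halt x (Y x) (Z x) (X x)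
    have hb1 := halt x (fderiv ℝ Y x (X x)) (Z x)
    have hb2 := halt x (fderiv ℝ Z x (Y x)) (X x)
    have hb3 := halt x (fderiv ℝ X x (Z x)) (Y x)
    have hs1 := symm2 f hf x (Y x) (Z x)
    have hs2 := symm2 g hg x (Z x) (X x)
    have hs3 := symm2 h hh x (X x) (Y x)
    linarith
end
end

section
/- Let σ be a closed smooth 2-form on E. Then for all smooth vector fields X, Y, Z on E and all smooth functions f, g, h : E → ℝ, the following identity of functions on E holds: (1/4)([X,Y]·h + [Y,Z]·f + [Z,X]·g) = { (1/2)( X·(Y·h − Z·g + σ(Y,Z)) − [Y,Z]·f ) + σ(X,[Y,Z]) + (1/2)( Y·(Z·f − X·h + σ(Z,X)) − [Z,X]·g ) + σ(Y,[Z,X]) + (1/2)( Z·(X·g − Y·f + σ(X,Y)) − [X,Y]·h ) + σ(Z,[X,Y]) } + { (1/2) X·( (1/2)(Y·h − Z·g) + σ(Y,Z) ) + (1/2) Y·( (1/2)(Z·f − X·h) + σ(Z,X) ) + (1/2) Z·( (1/2)(X·g − Y·f) + σ(X,Y) ) }. (This is the coherence identity verifying that the maps φ₀(X,f) = (X, df)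 and φ₂((X,f),(Y,g)) = (1/2)(X·g − Y·f) + σ(X,Y) define a morphism of Lie 2-algebras from the σ-twisted bracket on pairs to the Courant bracket.) -/
noncomputable section

variable {E : Type*} [NormedAddCommGroup E] [NormedSpace ℝ E] [FiniteDimensional ℝ E]

set_option linter.unusedSectionVars false
set_option linter.unusedVariables false

lemma actVF_contDiff {X : E → E} {g : E → ℝ} (hX : ContDiff ℝ (⊤ : ℕ∞) X) (hg : ContDiff ℝ (⊤ : ℕ∞) g) :
    ContDiff ℝ (⊤ : ℕ∞) (actVF X g) :=
  (hg.fderiv_right (by simp)).clm_apply hX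

lemma actVF_actVF (X Y : E → E) (g : E → ℝ) (hX : ContDiff ℝ (⊤ : ℕ∞) X) (hY : ContDiff ℝ (⊤ : ℕ∞) Y)
    (hg : ContDiff ℝ (⊤ : ℕ∞) g) (x : E) :
    actVF X (actVF Y g) x
      = fderiv ℝ (fderiv ℝ g) x (X x) (Y x) + fderiv ℝ g x (fderiv ℝ Y x (X x)) := by
  unfold actVF
  rw [fderiv_clm_apply ((hg.fderiv_right (m := (⊤ : ℕ∞)) (by simp)).differentiable (by simp) x)
    (hY.differentiable (by simp) x)]
  simp [add_comm]

lemma actVF_sigma (σ : E → E →L[ℝ] E →L[ℝ] ℝ) (hσ : ContDiff ℝ (⊤ : ℕ∞) σ)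
    (X Y Z : E → E) (hX : ContDiff ℝ (⊤ : ℕ∞) X) (hY : ContDiff ℝ (⊤ : ℕ∞) Y) (hZ : ContDiff ℝ (⊤ : ℕ∞) Z) (x : E) :
    actVF X (fun y => σ y (Y y) (Z y)) x
      = fderiv ℝ σ x (X x) (Y x) (Z x) + σ x (fderiv ℝ Y x (X x)) (Z x)
        + σ x (Y x) (fderiv ℝ Z x (X x)) := by
  unfold actVF
  rw [fderiv_clm_apply ((hσ.clm_apply hY).differentiable (by simp) x) (hZ.differentiable (by simp) x),
    fderiv_clm_apply (hσ.differentiable (by simp) x) (hY.differentiable (by simp) x)]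
  simp
  ring

lemma fderiv_sigma_antisym (σ : E → E →L[ℝ] E →L[ℝ] ℝ) (hσ : ContDiff ℝ (⊤ : ℕ∞) σ)
    (halt : ∀ x u v : E, σ x u v = - σ x v u) (x u v w : E) :
    fderiv ℝ σ x u v w = - fderiv ℝ σ x u w v := by
  have hd := (hσ.differentiable (by simp) x).hasFDerivAt
  set Ev : ∀ a b : E, (E →L[ℝ] E →L[ℝ] ℝ) →L[ℝ] ℝ :=
    fun a b => (ContinuousLinearMap.apply ℝ ℝ b).comp (ContinuousLinearMap.apply ℝ (E →L[ℝ] ℝ) a)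
    with hEv
  have h1 : HasFDerivAt (fun y => σ y v w) ((Ev v w).comp (fderiv ℝ σ x)) x := by
    simpa [hEv, Function.comp_def] using (Ev v w).hasFDerivAt.comp x hd
  have h2 : HasFDerivAt (fun y => σ y w v) ((Ev w v).comp (fderiv ℝ σ x)) x := by
    simpa [hEv, Function.comp_def] using (Ev w v).hasFDerivAt.comp x hd
  have h3 : HasFDerivAt (fun y => σ y v w) (-((Ev w v).comp (fderiv ℝ σ x))) x := by
    have := h2.neg
    simpa [← halt, Pi.neg_def] using this
  have := h1.unique h3
  have := congrFun (congrArg (fun (L : E →L[ℝ] ℝ) => (L : E → ℝ)) this) u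
  simpa [hEv] using this

lemma fderiv2_symm {g : E → ℝ} (hg : ContDiff ℝ (⊤ : ℕ∞) g) (x u v : E) :
    fderiv ℝ (fderiv ℝ g) x u v = fderiv ℝ (fderiv ℝ g) x v u :=
  second_derivative_symmetric (fun y => (hg.differentiable (by simp) y).hasFDerivAt)
    (((hg.fderiv_right (m := (⊤ : ℕ∞)) (by simp)).differentiable (by simp) x).hasFDerivAt) u v

lemma actVF_sub_add {X : E → E} {A B C : E → ℝ} (hX : ContDiff ℝ (⊤ : ℕ∞) X)
    (hA : ContDiff ℝ (⊤ : ℕ∞) A) (hB : ContDiff ℝ (⊤ : ℕ∞) B) (hC : ContDiff ℝ (⊤ : ℕ∞) C) (x : E) :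
    actVF X (fun y => A y - B y + C y) x = actVF X A x - actVF X B x + actVF X C x := by
  unfold actVF
  rw [fderiv_fun_add ((hA.differentiable (by simp) x).fun_sub (hB.differentiable (by simp) x))
      (hC.differentiable (by simp) x),
    fderiv_fun_sub (hA.differentiable (by simp) x) (hB.differentiable (by simp) x)]
  simp

lemma actVF_smul_sub_add {X : E → E} {A B C : E → ℝ} (c : ℝ) (hX : ContDiff ℝ (⊤ : ℕ∞) X)
    (hA : ContDiff ℝ (⊤ : ℕ∞) A) (hB : ContDiff ℝ (⊤ : ℕ∞) B) (hC : ContDiff ℝ (⊤ : ℕ∞) C) (x : E) :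
    actVF X (fun y => c * (A y - B y) + C y) x
      = c * (actVF X A x - actVF X B x) + actVF X C x := by
  unfold actVF
  rw [fderiv_fun_add (((hA.differentiable (by simp) x).fun_sub (hB.differentiable (by simp) x)).const_mul c)
      (hC.differentiable (by simp) x),
    fderiv_const_mul ((hA.differentiable (by simp) x).fun_sub (hB.differentiable (by simp) x)),
    fderiv_fun_sub (hA.differentiable (by simp) x) (hB.differentiable (by simp) x)]
  simp

theorem stmt11 (σ : E → E →L[ℝ] E →L[ℝ] ℝ) (hσ : ContDiff ℝ (⊤ : ℕ∞) σ)
    (halt : ∀ x u v : E, σ x u v = - σ x v u)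
    (hclosed : IsClosed2Form σ)
    (X Y Z : E → E) (hX : ContDiff ℝ (⊤ : ℕ∞) X) (hY : ContDiff ℝ (⊤ : ℕ∞) Y) (hZ : ContDiff ℝ (⊤ : ℕ∞) Z)
    (f g h : E → ℝ) (hf : ContDiff ℝ (⊤ : ℕ∞) f) (hg : ContDiff ℝ (⊤ : ℕ∞) g) (hh : ContDiff ℝ (⊤ : ℕ∞) h) :
    ∀ x : E,
      (1/4 : ℝ) * (actVF (lieVF X Y) h x + actVF (lieVF Y Z) f x + actVF (lieVF Z X) g x) =
      (((1/2 : ℝ) * (actVF X (fun y => actVF Y h y - actVF Z g y + σ y (Y y) (Z y)) x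
            - actVF (lieVF Y Z) f x) + σ x (X x) (lieVF Y Z x)
        + (1/2 : ℝ) * (actVF Y (fun y => actVF Z f y - actVF X h y + σ y (Z y) (X y)) x
            - actVF (lieVF Z X) g x) + σ x (Y x) (lieVF Z X x)
        + (1/2 : ℝ) * (actVF Z (fun y => actVF X g y - actVF Y f y + σ y (X y) (Y y)) x
            - actVF (lieVF X Y) h x) + σ x (Z x) (lieVF X Y x))
       +
       ((1/2 : ℝ) * actVF X (fun y => (1/2 : ℝ) * (actVF Y h y - actVF Z g y)
            + σ y (Y y) (Z y)) x
        + (1/2 : ℝ) * actVF Y (fun y => (1/2 : ℝ) * (actVF Z f y - actVF X h y)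
            + σ y (Z y) (X y)) x
        + (1/2 : ℝ) * actVF Z (fun y => (1/2 : ℝ) * (actVF X g y - actVF Y f y)
            + σ y (X y) (Y y)) x)) := by
  intro x
  have sYZ : ContDiff ℝ (⊤ : ℕ∞) (fun y => σ y (Y y) (Z y)) := (hσ.clm_apply hY).clm_apply hZ
  have sZX : ContDiff ℝ (⊤ : ℕ∞) (fun y => σ y (Z y) (X y)) := (hσ.clm_apply hZ).clm_apply hX
  have sXY : ContDiff ℝ (⊤ : ℕ∞) (fun y => σ y (X y) (Y y)) := (hσ.clm_apply hX).clm_apply hY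
  rw [actVF_sub_add hX (actVF_contDiff hY hh) (actVF_contDiff hZ hg) sYZ,
    actVF_sub_add hY (actVF_contDiff hZ hf) (actVF_contDiff hX hh) sZX,
    actVF_sub_add hZ (actVF_contDiff hX hg) (actVF_contDiff hY hf) sXY,
    actVF_smul_sub_add (1/2 : ℝ) hX (actVF_contDiff hY hh) (actVF_contDiff hZ hg) sYZ,
    actVF_smul_sub_add (1/2 : ℝ) hY (actVF_contDiff hZ hf) (actVF_contDiff hX hh) sZX,
    actVF_smul_sub_add (1/2 : ℝ) hZ (actVF_contDiff hX hg) (actVF_contDiff hY hf) sXY,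
    actVF_actVF X Y h hX hY hh, actVF_actVF X Z g hX hZ hg,
    actVF_actVF Y Z f hY hZ hf, actVF_actVF Y X h hY hX hh,
    actVF_actVF Z X g hZ hX hg, actVF_actVF Z Y f hZ hY hf,
    actVF_sigma σ hσ X Y Z hX hY hZ, actVF_sigma σ hσ Y Z X hY hZ hX,
    actVF_sigma σ hσ Z X Y hZ hX hY]
  have bh : actVF (lieVF X Y) h x
      = fderiv ℝ h x (fderiv ℝ Y x (X x)) - fderiv ℝ h x (fderiv ℝ X x (Y x)) := by
    simp [actVF, lieVF]
  have bf : actVF (lieVF Y Z) f x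
      = fderiv ℝ f x (fderiv ℝ Z x (Y x)) - fderiv ℝ f x (fderiv ℝ Y x (Z x)) := by
    simp [actVF, lieVF]
  have bg : actVF (lieVF Z X) g x
      = fderiv ℝ g x (fderiv ℝ X x (Z x)) - fderiv ℝ g x (fderiv ℝ Z x (X x)) := by
    simp [actVF, lieVF]
  have sb1 : σ x (X x) (lieVF Y Z x)
      = σ x (X x) (fderiv ℝ Z x (Y x)) - σ x (X x) (fderiv ℝ Y x (Z x)) := by
    simp [lieVF]
  have sb2 : σ x (Y x) (lieVF Z X x)
      = σ x (Y x) (fderiv ℝ X x (Z x)) - σ x (Y x) (fderiv ℝ Z x (X x)) := by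
    simp [lieVF]
  have sb3 : σ x (Z x) (lieVF X Y x)
      = σ x (Z x) (fderiv ℝ Y x (X x)) - σ x (Z x) (fderiv ℝ X x (Y x)) := by
    simp [lieVF]
  rw [bh, bf, bg, sb1, sb2, sb3]
  have symh := fderiv2_symm hh x (X x) (Y x)
  have symf := fderiv2_symm hf x (Y x) (Z x)
  have symg := fderiv2_symm hg x (Z x) (X x)
  have hcl := hclosed x (X x) (Y x) (Z x)
  have hanti := fderiv_sigma_antisym σ hσ halt x (Y x) (Z x) (X x)
  have ha1 := halt x (fderiv ℝ Y x (X x)) (Z x)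
  have ha2 := halt x (fderiv ℝ Z x (Y x)) (X x)
  have ha3 := halt x (fderiv ℝ X x (Z x)) (Y x)
  linarith
end
end
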